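/- Let g : ℝ → ℝ be even, subadditive, nonnegative, with g(0) = 0, let B be an n×n real matrix with entries b_{ij}, and let 0 < ε ≤ 1. Set u_i = ∑_{j=1}^n g(b_{ij}), ‖g[B]‖₁ = ∑_{i=1}^n u_i, and T = ∑_{j=1}^n g(∑_{i=1}^n b_{ij}). Suppose there is a row h with u_h ≥ (1 − ε/8)·‖g[B]‖₁, and let a be a real number satisfying (1 − ε/2)·T ≤ a ≤ (1 + ε/2)·T. Then (1 − ε)·u_h ≤ a ≤ (1 + ε)·u_h. -/

import Mathlib

/-!
Write `S = ‖g[B]‖₁` and `D = S - u_h` for the weight of the rows other than `h`. Subadditivity of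
`g` gives `T ≤ S`, and, writing `b_{hj}` as the column sum minus the other entries of column `j`,
evenness gives `u_h ≤ T + D`. So `T` lies within `D` of `u_h`, while heaviness of row `h` makes `D`
at most about `ε u_h / 7`; the two factors `1 ± ε/2` then absorb this error.
-/

open Finset

section Subadditive

variable {G ι κ : Type*} [AddCommGroup G] [Fintype ι] [Fintype κ] {g : G → ℝ}

theorem sum_apply_colSum_le (hg_sub : ∀ x y, g (x + y) ≤ g x + g y) (hg_zero : g 0 = 0)
    (B : ι → κ → G) : ∑ j, g (∑ i, B i j) ≤ ∑ i, ∑ j, g (B i j) := by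
  rw [sum_comm]
  exact sum_le_sum fun j _ => le_sum_of_subadditive g hg_zero.le hg_sub _ _

theorem sum_apply_row_le [DecidableEq ι] (hg_even : ∀ x, g (-x) = g x)
    (hg_sub : ∀ x y, g (x + y) ≤ g x + g y) (hg_zero : g 0 = 0) (B : ι → κ → G) (h : ι) :
    ∑ j, g (B h j) ≤ ∑ j, g (∑ i, B i j) + ∑ i ∈ univ.erase h, ∑ j, g (B i j) := by
  rw [sum_comm (s := univ.erase h), ← sum_add_distrib]
  refine sum_le_sum fun j _ => ?_
  have hsplit : B h j = ∑ i, B i j + -∑ i ∈ univ.erase h, B i j := by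
    rw [← add_sum_erase _ _ (mem_univ h)]
    abel
  calc g (B h j) ≤ g (∑ i, B i j) + g (-∑ i ∈ univ.erase h, B i j) := hsplit ▸ hg_sub _ _
    _ ≤ g (∑ i, B i j) + ∑ i ∈ univ.erase h, g (B i j) := by
      rw [hg_even]
      gcongr
      exact le_sum_of_subadditive g hg_zero.le hg_sub _ _

end Subadditive

theorem approx_of_abs_sub_le_of_heavy {u D T a ε : ℝ} (hε : 0 < ε) (hε1 : ε ≤ 1)
    (hT : |T - u| ≤ D) (hheavy : (1 - ε / 8) * (u + D) ≤ u)
    (ha_lo : (1 - ε / 2) * T ≤ a) (ha_hi : a ≤ (1 + ε / 2) * T) :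
    (1 - ε) * u ≤ a ∧ a ≤ (1 + ε) * u := by
  obtain ⟨hT_lo, hT_hi⟩ := abs_sub_le_iff.1 hT
  have hDu : (1 + ε / 2) * D ≤ ε / 2 * u := by nlinarith
  constructor <;> nlinarith

theorem stmt_12_general (n : ℕ) (g : ℝ → ℝ)
    (hg_even : ∀ x, g (-x) = g x)
    (hg_sub : ∀ x y, g (x + y) ≤ g x + g y)
    (hg_zero : g 0 = 0)
    (B : Fin n → Fin n → ℝ) (ε : ℝ) (hε : 0 < ε) (hε1 : ε ≤ 1)
    (u : Fin n → ℝ) (hu : ∀ i, u i = ∑ j, g (B i j))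
    (h : Fin n) (hheavy : u h ≥ (1 - ε / 8) * ∑ i, u i)
    (a : ℝ)
    (ha_lo : (1 - ε / 2) * ∑ j, g (∑ i, B i j) ≤ a)
    (ha_hi : a ≤ (1 + ε / 2) * ∑ j, g (∑ i, B i j)) :
    (1 - ε) * u h ≤ a ∧ a ≤ (1 + ε) * u h := by
  have hS : ∑ i, u i = u h + ∑ i ∈ univ.erase h, u i := (add_sum_erase _ _ (mem_univ h)).symm
  have hT_hi := sum_apply_colSum_le hg_sub hg_zero B
  have hT_lo := sum_apply_row_le hg_even hg_sub hg_zero B h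
  simp only [← hu] at hT_hi hT_lo
  rw [hS] at hT_hi hheavy
  exact approx_of_abs_sub_le_of_heavy hε hε1
    (abs_sub_le_iff.2 ⟨by linarith, by linarith⟩) hheavy ha_lo ha_hi

theorem stmt_12 (n : ℕ) (g : ℝ → ℝ)
    (hg_even : ∀ x, g (-x) = g x)
    (hg_sub : ∀ x y, g (x + y) ≤ g x + g y)
    (hg_nonneg : ∀ x, 0 ≤ g x)
    (hg_zero : g 0 = 0)
    (B : Fin n → Fin n → ℝ) (ε : ℝ) (hε : 0 < ε) (hε1 : ε ≤ 1)
    (u : Fin n → ℝ) (hu : ∀ i, u i = ∑ j, g (B i j))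
    (h : Fin n) (hheavy : u h ≥ (1 - ε / 8) * ∑ i, u i)
    (a : ℝ)
    (ha_lo : (1 - ε / 2) * ∑ j, g (∑ i, B i j) ≤ a)
    (ha_hi : a ≤ (1 + ε / 2) * ∑ j, g (∑ i, B i j)) :
    (1 - ε) * u h ≤ a ∧ a ≤ (1 + ε) * u h :=
  stmt_12_general n g hg_even hg_sub hg_zero B ε hε hε1 u hu h hheavy a ha_lo ha_hi
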